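/- For every natural number n ≥ 1, it is not the case that G_{n+1} ⊲ P_{n−1}(G_{n−1}). -/

import Mathlib

universe u

/-- Combinatorial games over a poset `A` of atoms: either an atomic game `[a]` for an atom
`a : A`, or a composite game `⟨L|R⟩` where `L` and `R` are nonempty families of games
(the left and right options). -/
inductive PoGame (A : Type u) : Type (u + 1) where
  | atom : A → PoGame A
  | mk : (xl xr : Type u) → (xl → PoGame A) → (xr → PoGame A) →
      Nonempty xl → Nonempty xr → PoGame A

/-- The type of pre-games (as formerly in Mathlib's `SetTheory.PGame`). -/
inductive SetTheory.PGame : Type (u + 1)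
  | mk : ∀ α β : Type u, (α → SetTheory.PGame) → (β → SetTheory.PGame) → SetTheory.PGame

/-- The pre-game `0 = { | }` (as formerly in Mathlib). -/
instance SetTheory.PGame.instZero : Zero SetTheory.PGame :=
  ⟨⟨PEmpty, PEmpty, PEmpty.elim, PEmpty.elim⟩⟩

namespace PoGame

variable {A : Type u}

/-- `G` is an atomic game. -/
def IsAtomic : PoGame A → Prop
  | atom _ => True
  | mk _ _ _ _ _ _ => False

/-- `G` is a left option of the game given as second argument. -/
def IsLeftOption (G : PoGame A) : PoGame A → Prop
  | atom _ => False
  | mk _ _ L _ _ _ => ∃ i, L i = G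

/-- `G` is a right option of the game given as second argument. -/
def IsRightOption (G : PoGame A) : PoGame A → Prop
  | atom _ => False
  | mk _ _ _ R _ _ => ∃ j, R j = G

section Order

variable [PartialOrder A]

mutual
  /-- `Le G H` is the relation `G ≤ H` on games over the poset `A`, defined by mutual
  recursion with `Lf` (the relation `G ⊲ H`): `G ≤ H` iff every left option `G^L`
  satisfies `G^L ⊲ H`, every right option `H^R` satisfies `G ⊲ H^R`, and if `G` or `H`
  is atomic then `G ⊲ H`. -/
  inductive Le : PoGame A → PoGame A → Prop
    | intro (G H : PoGame A)
        (hL : ∀ G', IsLeftOption G' G → Lf G' H)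
        (hR : ∀ H', IsRightOption H' H → Lf G H')
        (hA : IsAtomic G ∨ IsAtomic H → Lf G H) : Le G H

  /-- `Lf G H` is the relation `G ⊲ H` on games over the poset `A`: it holds iff some
  right option `G^R` satisfies `G^R ≤ H`, or some left option `H^L` satisfies `G ≤ H^L`,
  or `G = [a]` and `H = [b]` are atomic with `a ≤ b` in `A`. -/
  inductive Lf : PoGame A → PoGame A → Prop
    | rightOption (G H G' : PoGame A) (h : IsRightOption G' G) (hle : Le G' H) : Lf G H
    | leftOption (G H H' : PoGame A) (h : IsLeftOption H' H) (hle : Le G H') : Lf G H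
    | atom (a b : A) (hab : a ≤ b) : Lf (atom a) (atom b)
end

/-- Two games are equivalent if `G ≤ H` and `H ≤ G`. -/
def GEquiv (G H : PoGame A) : Prop := Le G H ∧ Le H G

/-- `G` is locally monotone if `G ≤ G^L` for every left option `G^L` and `G^R ≤ G` for
every right option `G^R`. -/
def LocallyMonotone (G : PoGame A) : Prop :=
  (∀ G', IsLeftOption G' G → Le G G') ∧ (∀ G', IsRightOption G' G → Le G' G)

/-- `G` is an option (left or right) of `H`. -/
def IsOption (G H : PoGame A) : Prop := IsLeftOption G H ∨ IsRightOption G H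

/-- `G` is a position of `H`: `H` itself, an option of `H`, an option of an option, etc. -/
def IsPosition (G H : PoGame A) : Prop := Relation.ReflTransGen IsOption G H

/-- `G` is monotone if every position of `G` is locally monotone. -/
def Monotone (G : PoGame A) : Prop := ∀ K, IsPosition K G → LocallyMonotone K

end Order

/-- The 5-element linearly ordered set `L5 = {-3, -2, -1, 0, 1}`. -/
abbrev L5 : Type := {a : ℤ // -3 ≤ a ∧ a ≤ 1}

/-- `G` has mean `C`: an atomic game `[a]` has mean `a`, and a composite game has mean `C`
iff every left option has mean `C + 1` and every right option has mean `C - 1`. -/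
def HasMean : PoGame L5 → ℤ → Prop
  | atom a, C => (a : ℤ) = C
  | mk _ _ L R _ _, C => (∀ i, HasMean (L i) (C + 1)) ∧ (∀ j, HasMean (R j) (C - 1))

/-- The game `⟨G | H⟩` with a single left option `G` and a single right option `H`. -/
def ofPair (G H : PoGame A) : PoGame A :=
  mk PUnit PUnit (fun _ => G) (fun _ => H) ⟨PUnit.unit⟩ ⟨PUnit.unit⟩

/-- `⋆ = ⟨-1 | -3⟩`. -/
def star : PoGame L5 := ofPair (atom ⟨-1, by norm_num⟩) (atom ⟨-3, by norm_num⟩)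

/-- `M(G) = ⟨1 | G⟩`. -/
def M (G : PoGame L5) : PoGame L5 := ofPair (atom ⟨1, by norm_num⟩) G

/-- `P(G) = ⟨G | -2⟩`. -/
def P (G : PoGame L5) : PoGame L5 := ofPair G (atom ⟨-2, by norm_num⟩)

/-- `P⋆(G) = ⟨G | ⋆⟩`. -/
def Pstar (G : PoGame L5) : PoGame L5 := ofPair G star

/-- `Pn n G = P G` if `n` is odd, `P⋆ G` if `n` is even. -/
def Pn (n : ℕ) (G : PoGame L5) : PoGame L5 := if Odd n then P G else Pstar G

/-- The sequence `G_0 = [0]`, `G_{n+1} = M (Pn n (G_n))`. -/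
def Gseq : ℕ → PoGame L5
  | 0 => atom ⟨0, by norm_num⟩
  | n + 1 => M (Pn n (Gseq n))

/-- The normal-play game obtained from a game over `L5` by replacing every atom by the
normal-play game `0 = { | }`, keeping the tree of left and right options. -/
def np : PoGame L5 → SetTheory.PGame.{0}
  | atom _ => 0
  | mk xl xr L R _ _ => SetTheory.PGame.mk xl xr (fun i => np (L i)) (fun j => np (R j))

end PoGame

/-!
Both `G_{n+1}` and `P_{n-1}(G_{n-1})` have a mean (`0` and `-1`). Between games with means,
`G ≤ H` forces `mean G ≤ mean H` and `G ⊲ H` forces `mean G ≤ mean H + 1`. In the extreme cases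
an extreme `⊲` can only come from an extreme `≤` on an option and vice versa, so the relation
survives the erasure `np` of all atoms as the corresponding normal-play relation. Thus
`G_{n+1} ⊲ P_{n-1}(G_{n-1})` would give `np G_{n+1} ⧏ np P_{n-1}(G_{n-1})`, whereas an
induction on the explicit normal-play games shows `np P_m(G_m) ≤ np G_{m+d+2}` for all `m, d`.
-/

namespace SetTheory.PGame

/- Conway's order on pre-games, with `⧏` defined positively (by a move) as in `PoGame.Lf`. -/
mutual
  inductive Le : PGame.{u} → PGame.{u} → Prop
    | intro {xl xr : Type u} {xL : xl → PGame} {xR : xr → PGame}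
        {yl yr : Type u} {yL : yl → PGame} {yR : yr → PGame}
        (hL : ∀ i, Lf (xL i) (mk yl yr yL yR)) (hR : ∀ j, Lf (mk xl xr xL xR) (yR j)) :
        Le (mk xl xr xL xR) (mk yl yr yL yR)

  inductive Lf : PGame.{u} → PGame.{u} → Prop
    | of_le_moveLeft {x : PGame} {yl yr : Type u} {yL : yl → PGame} {yR : yr → PGame}
        (i : yl) (h : Le x (yL i)) : Lf x (mk yl yr yL yR)
    | of_moveRight_le {xl xr : Type u} {xL : xl → PGame} {xR : xr → PGame} {y : PGame}
        (j : xr) (h : Le (xR j) y) : Lf (mk xl xr xL xR) y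
end

instance : LE PGame.{u} := ⟨Le⟩

infix:50 " ⧏ " => Lf

theorem le_lf_asymm (x y : PGame.{u}) : (x ≤ y → ¬ y ⧏ x) ∧ (y ≤ x → ¬ x ⧏ y) := by
  induction x generalizing y with
  | mk xl xr xL xR ihxL ihxR =>
    induction y with
    | mk yl yr yL yR ihyL ihyR =>
      constructor
      · rintro ⟨hL, hR⟩ (⟨i, hle⟩ | ⟨j, hle⟩)
        · exact (ihxL i _).2 hle (hL i)
        · exact (ihyR j).2 hle (hR j)
      · rintro ⟨hL, hR⟩ (⟨i, hle⟩ | ⟨j, hle⟩)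
        · exact (ihyL i).1 hle (hL i)
        · exact (ihxR j _).1 hle (hR j)

theorem not_lf_of_le {x y : PGame.{u}} (h : x ≤ y) : ¬ y ⧏ x :=
  (le_lf_asymm x y).1 h

theorem zero_le_zero : (0 : PGame.{u}) ≤ 0 :=
  Le.intro (fun i => i.elim) (fun j => j.elim)

def ofPair (x y : PGame.{u}) : PGame.{u} :=
  mk PUnit PUnit (fun _ => x) (fun _ => y)

def star : PGame.{u} := ofPair 0 0

theorem ofPair_le_ofPair {x y z w : PGame.{u}} (h₁ : x ⧏ ofPair z w) (h₂ : ofPair x y ⧏ w) :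
    ofPair x y ≤ ofPair z w :=
  Le.intro (fun _ => h₁) (fun _ => h₂)

theorem zero_le_ofPair {x y : PGame.{u}} (h : 0 ⧏ y) : 0 ≤ ofPair x y :=
  Le.intro (fun i => i.elim) (fun _ => h)

theorem lf_ofPair {x y z : PGame.{u}} (h : x ≤ y) : x ⧏ ofPair y z :=
  Lf.of_le_moveLeft PUnit.unit h

theorem ofPair_lf {x y z : PGame.{u}} (h : y ≤ z) : ofPair x y ⧏ z :=
  Lf.of_moveRight_le PUnit.unit h

theorem zero_lf_star : (0 : PGame.{u}) ⧏ star :=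
  lf_ofPair zero_le_zero

theorem star_lf_zero : (star : PGame.{u}) ⧏ 0 :=
  ofPair_lf zero_le_zero

end SetTheory.PGame

namespace PoGame

open SetTheory

theorem HasMean.of_isLeftOption {G G' : PoGame L5} {C : ℤ} (hG : HasMean G C)
    (h : IsLeftOption G' G) : HasMean G' (C + 1) := by
  cases G with
  | atom => exact h.elim
  | mk => obtain ⟨i, rfl⟩ := h; exact hG.1 i

theorem HasMean.of_isRightOption {G G' : PoGame L5} {C : ℤ} (hG : HasMean G C)
    (h : IsRightOption G' G) : HasMean G' (C - 1) := by
  cases G with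
  | atom => exact h.elim
  | mk => obtain ⟨j, rfl⟩ := h; exact hG.2 j

theorem np_le_np {G H : PoGame L5} (hL : ∀ G', IsLeftOption G' G → np G' ⧏ np H)
    (hR : ∀ H', IsRightOption H' H → np G ⧏ np H') : np G ≤ np H := by
  cases G <;> cases H
  all_goals
    refine PGame.Le.intro (fun i => ?_) (fun j => ?_)
  all_goals first
    | exact i.elim | exact j.elim | exact hL _ ⟨i, rfl⟩ | exact hR _ ⟨j, rfl⟩

theorem np_lf_np_of_isLeftOption {G H H' : PoGame L5} (h : IsLeftOption H' H)
    (hle : np G ≤ np H') : np G ⧏ np H := by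
  cases H with
  | atom => exact h.elim
  | mk => obtain ⟨i, rfl⟩ := h; exact PGame.Lf.of_le_moveLeft i hle

theorem np_lf_np_of_isRightOption {G G' H : PoGame L5} (h : IsRightOption G' G)
    (hle : np G' ≤ np H) : np G ⧏ np H := by
  cases G with
  | atom => exact h.elim
  | mk => obtain ⟨j, rfl⟩ := h; exact PGame.Lf.of_moveRight_le j hle

theorem le_of_atom_lf_atom {a b : L5} (h : Lf (atom a) (atom b)) : a ≤ b := by
  cases h with
  | rightOption _ _ _ h => exact h.elim
  | leftOption _ _ _ h => exact h.elim
  | atom _ _ hab => exact hab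

mutual
  theorem Le.mean_le {G H : PoGame L5} (h : Le G H) {C D : ℤ} (hG : HasMean G C)
      (hH : HasMean H D) : C ≤ D ∧ (C = D → np G ≤ np H) := by
    match h with
    | .intro _ _ hL hR hA =>
      have hLf : ∀ G', IsLeftOption G' G → C + 1 ≤ D + 1 ∧ (C + 1 = D + 1 → np G' ⧏ np H) :=
        fun G' h' => (hL G' h').mean_le_add_one (hG.of_isLeftOption h') hH
      have hRf : ∀ H', IsRightOption H' H → C ≤ D - 1 + 1 ∧ (C = D - 1 + 1 → np G ⧏ np H') :=
        fun H' h' => (hR H' h').mean_le_add_one hG (hH.of_isRightOption h')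
      refine ⟨?_, fun hCD => np_le_np (fun G' h' => (hLf G' h').2 (by omega))
        (fun H' h' => (hRf H' h').2 (by omega))⟩
      match G, H with
      | mk _ _ L _ ⟨i⟩ _, _ => have := hLf (L i) ⟨i, rfl⟩; omega
      | atom _, mk _ _ _ R _ ⟨j⟩ => have := hRf (R j) ⟨j, rfl⟩; omega
      | atom a, atom b =>
        have : (a : ℤ) ≤ b := le_of_atom_lf_atom (hA (Or.inl trivial))
        simp only [HasMean] at hG hH
        omega

  theorem Lf.mean_le_add_one {G H : PoGame L5} (h : Lf G H) {C D : ℤ} (hG : HasMean G C)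
      (hH : HasMean H D) : C ≤ D + 1 ∧ (C = D + 1 → np G ⧏ np H) := by
    match h with
    | .rightOption _ _ G' hG' hle =>
      have := hle.mean_le (hG.of_isRightOption hG') hH
      exact ⟨by omega, fun hCD => np_lf_np_of_isRightOption hG' (this.2 (by omega))⟩
    | .leftOption _ _ H' hH' hle =>
      have := hle.mean_le hG (hH.of_isLeftOption hH')
      exact ⟨this.1, fun hCD => np_lf_np_of_isLeftOption hH' (this.2 hCD)⟩
    | .atom a b hab =>
      have : (a : ℤ) ≤ b := hab
      simp only [HasMean] at hG hH
      omega
end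

theorem hasMean_star : HasMean star (-2) :=
  ⟨fun _ => rfl, fun _ => rfl⟩

theorem hasMean_Pn {G : PoGame L5} (hG : HasMean G 0) (n : ℕ) : HasMean (Pn n G) (-1) := by
  unfold Pn
  split_ifs
  exacts [⟨fun _ => hG, fun _ => rfl⟩, ⟨fun _ => hG, fun _ => hasMean_star⟩]

theorem hasMean_Gseq : ∀ n, HasMean (Gseq n) 0
  | 0 => rfl
  | n + 1 => ⟨fun _ => rfl, fun _ => hasMean_Pn (hasMean_Gseq n) n⟩

theorem np_Gseq_succ (n : ℕ) : np (Gseq (n + 1)) = PGame.ofPair 0 (np (Pn n (Gseq n))) := rfl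

theorem np_Pn (n : ℕ) (G : PoGame L5) :
    np (Pn n G) = PGame.ofPair (np G) (if Odd n then 0 else PGame.star) := by
  unfold Pn
  split_ifs <;> rfl

theorem lf_np_Pn {x : PGame} {G : PoGame L5} (h : x ≤ np G) (n : ℕ) : x ⧏ np (Pn n G) := by
  rw [np_Pn]
  exact PGame.lf_ofPair h

theorem zero_le_np_Gseq : ∀ n, 0 ≤ np (Gseq n)
  | 0 => PGame.zero_le_zero
  | n + 1 => PGame.zero_le_ofPair (lf_np_Pn (zero_le_np_Gseq n) n)

theorem np_Pn_lf_np_Pn_succ (n : ℕ) :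
    np (Pn n (Gseq n)) ⧏ np (Pn (n + 1) (Gseq (n + 1))) := by
  rw [np_Pn, np_Pn]
  refine PGame.ofPair_lf ?_
  rcases Nat.even_or_odd n with hn | hn
  · rw [if_neg (Nat.not_odd_iff_even.2 hn), if_pos hn.add_one]
    exact PGame.ofPair_le_ofPair (PGame.lf_ofPair (zero_le_np_Gseq (n + 1))) PGame.star_lf_zero
  · rw [if_pos hn, if_neg (Nat.not_odd_iff_even.2 hn.add_one)]
    exact PGame.zero_le_ofPair PGame.zero_lf_star

theorem np_Pn_le_np_Gseq_succ {m n : ℕ} (h₁ : np (Gseq m) ⧏ np (Gseq (n + 1)))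
    (h₂ : np (Pn m (Gseq m)) ⧏ np (Pn n (Gseq n))) : np (Pn m (Gseq m)) ≤ np (Gseq (n + 1)) := by
  rw [np_Pn m] at h₂ ⊢
  rw [np_Gseq_succ] at h₁ ⊢
  exact PGame.ofPair_le_ofPair h₁ h₂

theorem np_Pn_le_np_Gseq_of_forall_lf {m : ℕ}
    (h : ∀ d, np (Gseq m) ⧏ np (Gseq (m + d + 2))) :
    ∀ d, np (Pn m (Gseq m)) ≤ np (Gseq (m + d + 2))
  | 0 => np_Pn_le_np_Gseq_succ (h 0) (np_Pn_lf_np_Pn_succ m)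
  | d + 1 => np_Pn_le_np_Gseq_succ (h (d + 1))
      (lf_np_Pn (np_Pn_le_np_Gseq_of_forall_lf h d) _)

theorem np_Pn_le_np_Gseq : ∀ m d, np (Pn m (Gseq m)) ≤ np (Gseq (m + d + 2))
  | 0 => np_Pn_le_np_Gseq_of_forall_lf fun _ => PGame.lf_ofPair PGame.zero_le_zero
  | m + 1 => np_Pn_le_np_Gseq_of_forall_lf fun d => by
      rw [show m + 1 + d + 2 = m + (d + 1) + 2 by omega]
      exact PGame.ofPair_lf (np_Pn_le_np_Gseq m (d + 1))

end PoGame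

open PoGame in
/-- For every natural number `n ≥ 1`, it is not the case that
`G_{n+1} ⊲ P_{n-1}(G_{n-1})`. -/
theorem stmt_12 (n : ℕ) (hn : 1 ≤ n) :
    ¬ Lf (Gseq (n + 1)) (Pn (n - 1) (Gseq (n - 1))) := by
  obtain ⟨m, rfl⟩ : ∃ m, n = m + 1 := ⟨n - 1, by omega⟩
  intro h
  have hlf := (h.mean_le_add_one (hasMean_Gseq (m + 2)) (hasMean_Pn (hasMean_Gseq m) m)).2 rfl
  exact SetTheory.PGame.not_lf_of_le (np_Pn_le_np_Gseq m 0) hlf
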